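/- On the doubled Sierpinski gasket graph SG, the ball of radius 2^k around the origin satisfies |B_∘(2^k)| = 3^{k+1} + 2 for every integer k ≥ 0. -/

import Mathlib

open Filter MeasureTheory Topology
open scoped ENNReal

noncomputable section

attribute [local instance] Classical.propDecidable

namespace SGidla

/-- The Hausdorff dimension `α = log 3 / log 2` of the Sierpinski gasket. -/
def alpha : ℝ := Real.log 3 / Real.log 2

/-- The walk dimension `β = log 5 / log 2` of the Sierpinski gasket. -/
def beta : ℝ := Real.log 5 / Real.log 2

/-- Vertex sets `V_n` of the finite Sierpinski gasket approximations. -/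
def gasketV : ℕ → Set (ℝ × ℝ)
  | 0 => {((0:ℝ), (0:ℝ)), ((1:ℝ), (0:ℝ)), ((1/2 : ℝ), Real.sqrt 3 / 2)}
  | n+1 => gasketV n ∪ ((fun p => (((2:ℝ)^n, (0:ℝ)) + p)) '' gasketV n) ∪
      ((fun p => (((2:ℝ)^n/2, (2:ℝ)^n/2 * Real.sqrt 3) + p)) '' gasketV n)

/-- Edge sets `E_n` of the finite Sierpinski gasket approximations. -/
def gasketE : ℕ → Set ((ℝ × ℝ) × (ℝ × ℝ))
  | 0 => { (((0:ℝ),(0:ℝ)), ((1:ℝ),(0:ℝ))),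
           (((1:ℝ),(0:ℝ)), ((1/2:ℝ), Real.sqrt 3 / 2)),
           (((0:ℝ),(0:ℝ)), ((1/2:ℝ), Real.sqrt 3 / 2)) }
  | n+1 => gasketE n ∪
      ((fun e => (((2:ℝ)^n, (0:ℝ)) + e.1, ((2:ℝ)^n, (0:ℝ)) + e.2)) '' gasketE n) ∪
      ((fun e => (((2:ℝ)^n/2, (2:ℝ)^n/2 * Real.sqrt 3) + e.1,
                  ((2:ℝ)^n/2, (2:ℝ)^n/2 * Real.sqrt 3) + e.2)) '' gasketE n)

/-- Vertices of the one-sided Sierpinski gasket graph `SG⁺`. -/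
def SGplusV : Set (ℝ × ℝ) := ⋃ n, gasketV n

/-- Edges of the one-sided Sierpinski gasket graph `SG⁺`. -/
def SGplusE : Set ((ℝ × ℝ) × (ℝ × ℝ)) := ⋃ n, gasketE n

/-- Reflection across the y-axis. -/
def reflect (p : ℝ × ℝ) : ℝ × ℝ := (-p.1, p.2)

/-- Vertices of the doubled Sierpinski gasket graph `SG`. -/
def SGV : Set (ℝ × ℝ) := SGplusV ∪ reflect '' SGplusV

/-- Adjacency (as points of the plane) in the doubled gasket. -/
def sgAdj (p q : ℝ × ℝ) : Prop :=
  (p, q) ∈ SGplusE ∨ (q, p) ∈ SGplusE ∨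
  (reflect p, reflect q) ∈ SGplusE ∨ (reflect q, reflect p) ∈ SGplusE

/-- The vertex type of the doubled Sierpinski gasket graph. -/
abbrev Vtx := {p : ℝ × ℝ // p ∈ SGV}

/-- The doubled Sierpinski gasket graph `SG` as a simple graph. -/
def SG : SimpleGraph Vtx where
  Adj x y := x ≠ y ∧ sgAdj x.1 y.1
  symm := by
    constructor
    rintro x y ⟨hne, h⟩
    refine ⟨hne.symm, ?_⟩
    unfold sgAdj at h ⊢
    tauto
  loopless := by constructor; rintro x ⟨hne, _⟩; exact hne rfl

lemma origin_mem : (((0:ℝ), (0:ℝ)) : ℝ × ℝ) ∈ SGV := by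
  left
  exact Set.mem_iUnion.2 ⟨0, by simp [gasketV]⟩

/-- The origin `∘ = (0,0)` of `SG`. -/
def origin : Vtx := ⟨((0:ℝ), (0:ℝ)), origin_mem⟩

/-- The closed graph-metric ball of (real) radius `r` around `x`. -/
def ball (x : Vtx) (r : ℝ) : Set Vtx := {z | (SG.dist x z : ℝ) ≤ r}

/-- `b_n = |B_∘(n)|`. -/
def bvol (n : ℕ) : ℕ := (ball origin n).ncard

/-- The inner boundary `∂_I A` of a set of vertices. -/
def innerBdry (A : Set Vtx) : Set Vtx := {y | y ∈ A ∧ ∃ z, SG.Adj y z ∧ z ∉ A}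

/-- Graph distance from a vertex to a set of vertices. -/
def distToSet (z : Vtx) (A : Set Vtx) : ℕ := sInf (SG.dist z '' A)

/-- Vertex degree. -/
def deg (x : Vtx) : ℕ := (SG.neighborSet x).ncard

/-- One-step transition probability of the simple random walk on `SG`. -/
def stepProb (x y : Vtx) : ℝ := if SG.Adj x y then 1 / (deg x : ℝ) else 0

/-- Probability that the simple random walk started at `x` follows the path `p`. -/
def pathWeight (x : Vtx) {t : ℕ} (p : Fin (t+1) → Vtx) : ℝ :=
  (if p 0 = x then 1 else 0) * ∏ j : Fin t, stepProb (p j.castSucc) (p j.succ)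

/-- Probability that the simple random walk started at `x` avoids `A` up to time `t`. -/
def stayProb (x : Vtx) (A : Set Vtx) (t : ℕ) : ℝ≥0∞ :=
  ∑' p : Fin (t+1) → Vtx,
    if ∀ j, p j ∉ A then ENNReal.ofReal (pathWeight x p) else 0

/-- The stopping set of `τ_x(r)`: `∂_I B_x(r) ∪ B_x(r)ᶜ`. -/
def stopSetAt (x : Vtx) (r : ℝ) : Set Vtx := innerBdry (ball x r) ∪ (ball x r)ᶜ

/-- `E_x(τ_x(r))`, the expected exit time, via `E τ = Σ_t P(τ > t)`. -/
def expExit (x : Vtx) (r : ℝ) : ℝ≥0∞ := ∑' t : ℕ, stayProb x (stopSetAt x r) t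

/-- `E_x(τ(n))` for the origin-centered exit time `τ(n)`. -/
def expExitO (x : Vtx) (n : ℕ) : ℝ≥0∞ := ∑' t : ℕ, stayProb x (stopSetAt origin n) t

/-- The stopped Green function `g_n(x,y)`, with values in `ℝ≥0∞`:
`g_n(x,y) = Σ_t P_x(X_t = y, τ(n) > t)`. -/
def greenE (n : ℕ) (x y : Vtx) : ℝ≥0∞ :=
  ∑' t : ℕ, ∑' p : Fin (t+1) → Vtx,
    if (∀ j, p j ∉ stopSetAt origin n) ∧ p (Fin.last t) = y
    then ENNReal.ofReal (pathWeight x p) else 0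

/-- The stopped Green function `g_n(x,y)` as a real number. -/
def green (n : ℕ) (x y : Vtx) : ℝ := (greenE n x y).toReal

/-- The (probabilistic) graph Laplacian on `SG`. -/
def lap (f : Vtx → ℝ) (x : Vtx) : ℝ :=
  (1 / (deg x : ℝ)) * (∑ᶠ y ∈ SG.neighborSet x, f y) - f x

/-- The indicator `δ_x` of a vertex. -/
def vtxInd (x : Vtx) : Vtx → ℝ := fun z => if z = x then 1 else 0

/-- The toppling operator `T_x μ = μ + max(μ(x)-1,0)·Δδ_x`. -/
def topple (x : Vtx) (μ : Vtx → ℝ) : Vtx → ℝ :=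
  fun z => μ z + max (μ x - 1) 0 * lap (vtxInd x) z

/-- `μ_k = T_{x_k} ⋯ T_{x_1} μ_0`. -/
def toppleIter (x : ℕ → Vtx) (μ0 : Vtx → ℝ) : ℕ → Vtx → ℝ
  | 0 => μ0
  | k+1 => topple (x k) (toppleIter x μ0 k)

/-- A toppling sequence visits every vertex infinitely often. -/
def IsTopplingSeq (x : ℕ → Vtx) : Prop := ∀ v : Vtx, {k | x k = v}.Infinite

/-- The odometer `u_k(y)`: mass emitted from `y` during the first `k` topplings. -/
def odom (x : ℕ → Vtx) (μ0 : Vtx → ℝ) (k : ℕ) (y : Vtx) : ℝ :=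
  ∑ j ∈ Finset.range k, if x j = y then max (toppleIter x μ0 j y - 1) 0 else 0

/-- A sand distribution: nonnegative with finite support. -/
def IsSandDist (μ : Vtx → ℝ) : Prop := (∀ z, 0 ≤ μ z) ∧ (Function.support μ).Finite

/-- `X i` is a family of independent simple random walks on `SG`, `X i` started at
`start i`; characterized through the finite-dimensional distributions. -/
def IsIndepSRWs {Ω : Type*} [MeasurableSpace Ω] (P : Measure Ω) {ι : Type*}
    (X : ι → ℕ → Ω → Vtx) (start : ι → Vtx) : Prop :=
  ∀ (s : Finset ι) (k : ℕ) (p : ι → ℕ → Vtx),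
    P {ω | ∀ i ∈ s, ∀ j ≤ k, X i j ω = p i j} =
      ∏ i ∈ s, ENNReal.ofReal (pathWeight (start i) (fun j : Fin (k+1) => p i (j : ℕ)))

/-- The IDLA cluster `I(i)` built from the walks `X 0, X 1, …`. -/
def idla {Ω : Type*} (X : ℕ → ℕ → Ω → Vtx) (ω : Ω) : ℕ → Set Vtx
  | 0 => ∅
  | i+1 => idla X ω i ∪ {X i (sInf {t | X i t ω ∉ idla X ω i}) ω}

/-- `I(S; x → A)` for a single particle with trajectory `w`. -/
def addStopped (A S : Set Vtx) (w : ℕ → Vtx) : Set Vtx :=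
  S ∪ {w (min (sInf {t | w t ∉ S}) (sInf {t | w t ∉ A} - 1))}

/-- `I(S; x_1,…,x_k → A)` for consecutive particles with trajectories `ws`. -/
def stoppedCluster (A : Set Vtx) : Set Vtx → List (ℕ → Vtx) → Set Vtx
  | S, [] => S
  | S, w :: ws => stoppedCluster A (addStopped A S w) ws

/-- The stopped IDLA cluster `I_{b_n}(∘ → n)`. -/
def stoppedIdla {Ω : Type*} (X : ℕ → ℕ → Ω → Vtx) (ω : Ω) (n : ℕ) : Set Vtx :=
  stoppedCluster (ball origin n) ∅ (List.ofFn (fun i : Fin (bvol n) => fun t => X (i : ℕ) t ω))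

/-!
The ball `B_∘(2^k)` is exactly `V_k` together with its mirror image. Every vertex of `V_n` is
within `2^n` of each corner of the level-`n` triangle: a vertex in one of the three copies making
up `V_{n+1}` is reached from a corner of `V_{n+1}` by walking inside the copy of that corner to
the corner it shares with the vertex's copy, and then inside the latter. Conversely,
`|x| + y/√3` changes by at most `1` along every edge, and the vertices of `SG⁺` where it is at
most `2^k` are exactly those of `V_k`. Since the three copies of `V_n` meet pairwise in a single
corner, `|V_{n+1}| = 3|V_n| - 3`, so `2|V_k| = 3^{k+1} + 3`; the two halves share only `∘`.
-/

lemma _root_.SimpleGraph.Hom.edist_le {V W : Type*} {G : SimpleGraph V} {G' : SimpleGraph W}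
    (f : G →g G') (u v : V) : G'.edist (f u) (f v) ≤ G.edist u v := by
  by_cases h : G.Reachable u v
  · obtain ⟨w, hw⟩ := h.exists_walk_length_eq_edist
    rw [← hw, ← w.length_map f]
    exact SimpleGraph.edist_le _
  · rw [SimpleGraph.edist_eq_top_of_not_reachable h]
    exact le_top

lemma _root_.SimpleGraph.Walk.apply_le_apply_add_length {V : Type*} {G : SimpleGraph V}
    {f : V → ℝ} (hf : ∀ x y, G.Adj x y → f y ≤ f x + 1) {u v : V} (w : G.Walk u v) :
    f v ≤ f u + w.length := by
  induction w with
  | nil => simp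
  | cons h w ih =>
    rw [SimpleGraph.Walk.length_cons, Nat.cast_succ]
    linarith [hf _ _ h]

def cornerR (n : ℕ) : ℝ × ℝ := ((2:ℝ)^n, 0)

def cornerA (n : ℕ) : ℝ × ℝ := ((2:ℝ)^n/2, (2:ℝ)^n/2 * Real.sqrt 3)

def corners (n : ℕ) : Set (ℝ × ℝ) := {0, cornerR n, cornerA n}

lemma gasketV_zero : gasketV 0 = corners 0 := by
  simp only [gasketV, corners, cornerR, cornerA, pow_zero, Prod.mk_zero_zero,
    div_mul_eq_mul_div, one_mul]

lemma gasketE_zero :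
    gasketE 0 = {(0, cornerR 0), (cornerR 0, cornerA 0), (0, cornerA 0)} := by
  simp only [gasketE, cornerR, cornerA, pow_zero, Prod.mk_zero_zero, div_mul_eq_mul_div, one_mul]

lemma gasketV_succ (n : ℕ) : gasketV (n+1) =
    gasketV n ∪ (cornerR n + ·) '' gasketV n ∪ (cornerA n + ·) '' gasketV n := rfl

lemma gasketE_succ (n : ℕ) : gasketE (n+1) = gasketE n ∪
    (fun e => (cornerR n + e.1, cornerR n + e.2)) '' gasketE n ∪
    (fun e => (cornerA n + e.1, cornerA n + e.2)) '' gasketE n := rfl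

lemma mem_gasketV_succ {n : ℕ} {p : ℝ × ℝ} :
    p ∈ gasketV (n+1) ↔ ∃ t ∈ corners n, ∃ w ∈ gasketV n, t + w = p := by
  simp only [gasketV_succ, corners, Set.mem_union, Set.mem_image, Set.mem_insert_iff,
    Set.mem_singleton_iff, exists_eq_or_imp, exists_eq_left, zero_add, exists_eq_right, or_assoc]

lemma mem_gasketE_succ {n : ℕ} {e : (ℝ × ℝ) × (ℝ × ℝ)} :
    e ∈ gasketE (n+1) ↔
      ∃ t ∈ corners n, ∃ e' ∈ gasketE n, (t + e'.1, t + e'.2) = e := by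
  simp only [gasketE_succ, corners, Set.mem_union, Set.mem_image, Set.mem_insert_iff,
    Set.mem_singleton_iff, exists_eq_or_imp, exists_eq_left, zero_add, exists_eq_right, or_assoc]

lemma exists_add_self_eq_of_mem_corners_succ {n : ℕ} {c : ℝ × ℝ} (hc : c ∈ corners (n+1)) :
    ∃ s ∈ corners n, s + s = c := by
  rcases hc with rfl | rfl | rfl
  · exact ⟨0, by simp [corners], add_zero 0⟩
  · exact ⟨cornerR n, by simp [corners], by simp [cornerR, pow_succ, mul_two]⟩
  · exact ⟨cornerA n, by simp [corners], by ext <;> simp [cornerA, pow_succ]; ring⟩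

lemma corners_subset_gasketV (n : ℕ) : corners n ⊆ gasketV n := by
  induction n with
  | zero => exact gasketV_zero.symm.subset
  | succ n ih =>
    intro c hc
    obtain ⟨s, hs, rfl⟩ := exists_add_self_eq_of_mem_corners_succ hc
    exact mem_gasketV_succ.2 ⟨s, hs, s, ih hs, rfl⟩

lemma gasketV_mono : Monotone gasketV :=
  monotone_nat_of_le_succ fun _ p hp =>
    mem_gasketV_succ.2 ⟨0, by simp [corners], p, hp, zero_add p⟩

lemma gasketV_finite (n : ℕ) : (gasketV n).Finite := by
  induction n with
  | zero => simp [gasketV_zero, corners]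
  | succ n ih => exact (ih.union (ih.image _)).union (ih.image _)

lemma gasketE_endpoints {n : ℕ} {e : (ℝ × ℝ) × (ℝ × ℝ)} (he : e ∈ gasketE n) :
    e.1 ∈ gasketV n ∧ e.2 ∈ gasketV n := by
  induction n generalizing e with
  | zero =>
    have h := corners_subset_gasketV 0
    simp only [gasketE_zero, Set.mem_insert_iff, Set.mem_singleton_iff] at he
    rcases he with rfl | rfl | rfl <;> exact ⟨h (by simp [corners]), h (by simp [corners])⟩
  | succ n ih =>
    obtain ⟨t, ht, e', he', rfl⟩ := mem_gasketE_succ.1 he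
    exact ⟨mem_gasketV_succ.2 ⟨t, ht, _, (ih he').1, rfl⟩,
      mem_gasketV_succ.2 ⟨t, ht, _, (ih he').2, rfl⟩⟩

/- Coordinates in the basis `(1, 0)`, `(1/2, √3/2)` of the triangular lattice; in them the
corners of level `n` are `(0, 0)`, `(2^n, 0)` and `(0, 2^n)`. -/
def coordA (p : ℝ × ℝ) : ℝ := p.1 - p.2 / Real.sqrt 3

def coordB (p : ℝ × ℝ) : ℝ := 2 * p.2 / Real.sqrt 3

lemma fst_eq_coord (p : ℝ × ℝ) : p.1 = coordA p + coordB p / 2 := by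
  simp only [coordA, coordB]; ring

lemma snd_eq_coord (p : ℝ × ℝ) : p.2 = Real.sqrt 3 * coordB p / 2 := by
  simp only [coordB]; field_simp

lemma eq_of_coord_eq {p q : ℝ × ℝ} (hA : coordA p = coordA q) (hB : coordB p = coordB q) :
    p = q := by
  ext
  · rw [fst_eq_coord, fst_eq_coord q, hA, hB]
  · rw [snd_eq_coord, snd_eq_coord q, hB]

lemma coordA_add (p q : ℝ × ℝ) : coordA (p + q) = coordA p + coordA q := by
  simp only [coordA, Prod.fst_add, Prod.snd_add]; ring

lemma coordB_add (p q : ℝ × ℝ) : coordB (p + q) = coordB p + coordB q := by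
  simp only [coordB, Prod.snd_add]; ring

@[simp] lemma coordA_zero : coordA 0 = 0 := by simp [coordA]

@[simp] lemma coordB_zero : coordB 0 = 0 := by simp [coordB]

@[simp] lemma coordA_cornerR (n : ℕ) : coordA (cornerR n) = 2 ^ n := by simp [coordA, cornerR]

@[simp] lemma coordB_cornerR (n : ℕ) : coordB (cornerR n) = 0 := by simp [coordB, cornerR]

@[simp] lemma coordA_cornerA (n : ℕ) : coordA (cornerA n) = 0 := by simp [coordA, cornerA]

@[simp] lemma coordB_cornerA (n : ℕ) : coordB (cornerA n) = 2 ^ n := by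
  simp [coordB, cornerA]; field_simp

lemma zero_ne_cornerR (n : ℕ) : 0 ≠ cornerR n := fun h =>
  (pow_pos (two_pos (α := ℝ)) n).ne (by simpa using congrArg coordA h)

lemma zero_ne_cornerA (n : ℕ) : 0 ≠ cornerA n := fun h =>
  (pow_pos (two_pos (α := ℝ)) n).ne (by simpa using congrArg coordB h)

lemma cornerR_ne_cornerA (n : ℕ) : cornerR n ≠ cornerA n := fun h => by
  simpa using congrArg coordA h

lemma ncard_corners (n : ℕ) : (corners n).ncard = 3 :=
  Set.ncard_eq_three.2 ⟨0, cornerR n, cornerA n, zero_ne_cornerR n, zero_ne_cornerA n,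
    cornerR_ne_cornerA n, rfl⟩

def simplex (n : ℕ) : Set (ℝ × ℝ) :=
  {p | 0 ≤ coordA p ∧ 0 ≤ coordB p ∧ coordA p + coordB p ≤ 2 ^ n}

lemma corners_subset_simplex (n : ℕ) : corners n ⊆ simplex n := by
  rintro c (rfl | rfl | rfl) <;> simp [simplex]

lemma add_mem_simplex_succ {n : ℕ} {p q : ℝ × ℝ} (hp : p ∈ simplex n)
    (hq : q ∈ simplex n) :
    p + q ∈ simplex (n+1) := by
  obtain ⟨hp1, hp2, hp3⟩ := hp
  obtain ⟨hq1, hq2, hq3⟩ := hq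
  refine ⟨?_, ?_, ?_⟩ <;> simp only [coordA_add, coordB_add, pow_succ] <;> linarith

lemma gasketV_subset_simplex (n : ℕ) : gasketV n ⊆ simplex n := by
  induction n with
  | zero => rw [gasketV_zero]; exact corners_subset_simplex 0
  | succ n ih =>
    intro p hp
    obtain ⟨t, ht, w, hw, rfl⟩ := mem_gasketV_succ.1 hp
    exact add_mem_simplex_succ (corners_subset_simplex n ht) (ih hw)

lemma eq_zero_of_mem_simplex {n : ℕ} {p : ℝ × ℝ} (hp : p ∈ simplex n)
    (h : coordA p + coordB p ≤ 0) : p = 0 := by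
  obtain ⟨hA, hB, -⟩ := hp
  exact eq_of_coord_eq (by simp; linarith) (by simp; linarith)

lemma fst_nonneg_of_mem_simplex {n : ℕ} {p : ℝ × ℝ} (hp : p ∈ simplex n) : 0 ≤ p.1 := by
  rw [fst_eq_coord]; linarith [hp.1, hp.2.1]

lemma mem_gasketV_of_mem_succ {n : ℕ} {p : ℝ × ℝ} (hp : p ∈ gasketV (n+1))
    (h : coordA p + coordB p ≤ 2 ^ n) : p ∈ gasketV n := by
  obtain ⟨t, ht, w, hw, rfl⟩ := mem_gasketV_succ.1 hp
  have hw' := gasketV_subset_simplex n hw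
  simp only [coordA_add, coordB_add] at h
  rcases ht with rfl | rfl | rfl
  · rwa [zero_add]
  all_goals
    rw [eq_zero_of_mem_simplex hw' (by simp at h; linarith), add_zero]
    exact corners_subset_gasketV n (by simp [corners])

lemma mem_gasketV_of_coord_le {k n : ℕ} {p : ℝ × ℝ} (hp : p ∈ gasketV n)
    (h : coordA p + coordB p ≤ 2 ^ k) : p ∈ gasketV k := by
  induction n with
  | zero => exact gasketV_mono (Nat.zero_le k) hp
  | succ n ih =>
    rcases le_or_gt k n with hkn | hnk
    · exact ih (mem_gasketV_of_mem_succ hp (h.trans (pow_le_pow_right₀ one_le_two hkn)))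
    · exact gasketV_mono hnk hp

lemma image_add_inter_image_add {n : ℕ} {s t : ℝ × ℝ} (hs : s ∈ corners n)
    (ht : t ∈ corners n) (hst : s ≠ t) :
    (s + ·) '' gasketV n ∩ (t + ·) '' gasketV n = {s + t} := by
  apply Set.Subset.antisymm
  · rintro _ ⟨⟨w, hw, rfl⟩, w', hw', heq⟩
    obtain ⟨hw1, hw2, hw3⟩ := gasketV_subset_simplex n hw
    obtain ⟨hw1', hw2', hw3'⟩ := gasketV_subset_simplex n hw'
    have hA := congrArg coordA heq
    have hB := congrArg coordB heq
    simp only [coordA_add, coordB_add] at hA hB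
    suffices w = t by rw [this]; rfl
    rcases hs with rfl | rfl | rfl <;> rcases ht with rfl | rfl | rfl <;>
      simp only [ne_eq, not_true_eq_false] at hst <;>
      simp at hA hB <;> exact eq_of_coord_eq (by simp; linarith) (by simp; linarith)
  · rintro _ rfl
    exact ⟨⟨t, corners_subset_gasketV n ht, rfl⟩, s, corners_subset_gasketV n hs,
      add_comm t s⟩

lemma ncard_gasketV_succ (n : ℕ) : (gasketV (n+1)).ncard + 3 = 3 * (gasketV n).ncard := by
  have hfin := gasketV_finite n
  have h0 : (0 : ℝ × ℝ) ∈ corners n := by simp [corners]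
  have hR : cornerR n ∈ corners n := by simp [corners]
  have hA : cornerA n ∈ corners n := by simp [corners]
  have hVR := image_add_inter_image_add h0 hR (zero_ne_cornerR n)
  have hVA := image_add_inter_image_add h0 hA (zero_ne_cornerA n)
  have hRA := image_add_inter_image_add hR hA (cornerR_ne_cornerA n)
  have hA_ne : cornerA n ≠ cornerR n + cornerA n := fun h =>
    zero_ne_cornerR n (by simpa [eq_comm] using h)
  simp only [zero_add, Set.image_id'] at hVR hVA
  have h1 := Set.ncard_union_add_ncard_inter _ _ hfin (hfin.image (cornerR n + ·))
  have h2 := Set.ncard_union_add_ncard_inter _ _ (hfin.union (hfin.image (cornerR n + ·)))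
    (hfin.image (cornerA n + ·))
  rw [Set.union_inter_distrib_right, hVA, hRA, Set.singleton_union, Set.ncard_pair hA_ne] at h2
  rw [hVR, Set.ncard_singleton] at h1
  rw [Set.ncard_image_of_injective _ (add_right_injective _)] at h1 h2
  rw [gasketV_succ]
  omega

lemma two_mul_ncard_gasketV (n : ℕ) : 2 * (gasketV n).ncard = 3 ^ (n+1) + 3 := by
  induction n with
  | zero => simp [gasketV_zero, ncard_corners]
  | succ n ih => have := ncard_gasketV_succ n; rw [pow_succ]; omega

def gasketGraph (n : ℕ) : SimpleGraph (ℝ × ℝ) :=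
  SimpleGraph.fromRel fun p q => (p, q) ∈ gasketE n

lemma edist_add_le {n : ℕ} {t : ℝ × ℝ} (ht : t ∈ corners n) (p q : ℝ × ℝ) :
    (gasketGraph (n+1)).edist (t + p) (t + q) ≤ (gasketGraph n).edist p q :=
  let f : gasketGraph n →g gasketGraph (n+1) :=
    { toFun := (t + ·)
      map_rel' := by
        rintro p q ⟨hne, h⟩
        refine ⟨fun h' => hne (add_left_cancel h'), h.imp ?_ ?_⟩ <;>
          exact fun he => mem_gasketE_succ.2 ⟨t, ht, _, he, rfl⟩ }
  f.edist_le p q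

lemma edist_corner_le {n : ℕ} {c p : ℝ × ℝ} (hc : c ∈ corners n) (hp : p ∈ gasketV n) :
    (gasketGraph n).edist c p ≤ ((2 ^ n : ℕ) : ℕ∞) := by
  induction n generalizing c p with
  | zero =>
    rw [gasketV_zero] at hp
    rw [pow_zero, Nat.cast_one, SimpleGraph.edist_le_one_iff_adj_or_eq]
    have := zero_ne_cornerR 0
    have := zero_ne_cornerA 0
    have := cornerR_ne_cornerA 0
    rcases hc with rfl | rfl | rfl <;> rcases hp with rfl | rfl | rfl <;>
      simp_all [gasketGraph, gasketE_zero, eq_comm]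
  | succ n ih =>
    obtain ⟨s, hs, rfl⟩ := exists_add_self_eq_of_mem_corners_succ hc
    obtain ⟨t, ht, w, hw, rfl⟩ := mem_gasketV_succ.1 hp
    calc (gasketGraph (n+1)).edist (s + s) (t + w)
        ≤ (gasketGraph (n+1)).edist (s + s) (s + t)
            + (gasketGraph (n+1)).edist (t + s) (t + w) := by
          rw [add_comm t s]; exact SimpleGraph.edist_triangle
      _ ≤ (gasketGraph n).edist s t + (gasketGraph n).edist s w :=
          add_le_add (edist_add_le hs s t) (edist_add_le ht s w)
      _ ≤ ((2 ^ n : ℕ) : ℕ∞) + ((2 ^ n : ℕ) : ℕ∞) :=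
          add_le_add (ih hs (corners_subset_gasketV n ht)) (ih hs hw)
      _ = ((2 ^ (n+1) : ℕ) : ℕ∞) := by push_cast; ring

lemma gasketV_subset_SGV (n : ℕ) : gasketV n ⊆ SGV :=
  fun _ hp => Or.inl (Set.mem_iUnion.2 ⟨n, hp⟩)

def gasketHom (n : ℕ) : gasketGraph n →g SG where
  toFun p := if h : p ∈ SGV then ⟨p, h⟩ else origin
  map_rel' := by
    rintro p q ⟨hne, h⟩
    have hpq : p ∈ gasketV n ∧ q ∈ gasketV n := by
      rcases h with h | h
      · exact gasketE_endpoints h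
      · exact (gasketE_endpoints h).symm
    rw [dif_pos (gasketV_subset_SGV n hpq.1), dif_pos (gasketV_subset_SGV n hpq.2)]
    refine ⟨fun h' => hne (congrArg Subtype.val h'), ?_⟩
    rcases h with h | h
    · exact Or.inl (Set.mem_iUnion.2 ⟨n, h⟩)
    · exact Or.inr (Or.inl (Set.mem_iUnion.2 ⟨n, h⟩))

lemma gasketHom_apply {n : ℕ} {z : Vtx} : gasketHom n z.1 = z := dif_pos z.2

lemma reflect_involutive : Function.Involutive reflect := fun p => by simp [reflect]

lemma reflect_zero : reflect 0 = 0 := Prod.ext neg_zero rfl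

lemma reflect_mem_SGV {p : ℝ × ℝ} (hp : p ∈ SGV) : reflect p ∈ SGV := by
  rcases hp with hp | ⟨q, hq, rfl⟩
  · exact Or.inr ⟨p, hp, rfl⟩
  · rw [reflect_involutive q]; exact Or.inl hq

lemma sgAdj_reflect {p q : ℝ × ℝ} (h : sgAdj p q) : sgAdj (reflect p) (reflect q) := by
  unfold sgAdj at h ⊢
  rw [reflect_involutive p, reflect_involutive q]
  tauto

def reflectHom : SG →g SG where
  toFun z := ⟨reflect z.1, reflect_mem_SGV z.2⟩
  map_rel' := fun ⟨hne, h⟩ =>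
    ⟨fun h' => hne (Subtype.ext (reflect_involutive.injective (congrArg Subtype.val h'))),
      sgAdj_reflect h⟩

lemma reflectHom_origin : reflectHom origin = origin := Subtype.ext reflect_zero

lemma reflectHom_reflectHom (z : Vtx) : reflectHom (reflectHom z) = z :=
  Subtype.ext (reflect_involutive z.1)

lemma edist_origin_le_of_mem_gasketV {n : ℕ} {z : Vtx} (hz : z.1 ∈ gasketV n) :
    SG.edist origin z ≤ ((2 ^ n : ℕ) : ℕ∞) :=
  calc SG.edist origin z = SG.edist (gasketHom n origin.1) (gasketHom n z.1) := by
        rw [gasketHom_apply, gasketHom_apply]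
    _ ≤ (gasketGraph n).edist 0 z.1 := (gasketHom n).edist_le _ _
    _ ≤ ((2 ^ n : ℕ) : ℕ∞) := edist_corner_le (by simp [corners]) hz

lemma edist_origin_le {n : ℕ} {z : Vtx} (hz : z.1 ∈ gasketV n ∪ reflect ⁻¹' gasketV n) :
    SG.edist origin z ≤ ((2 ^ n : ℕ) : ℕ∞) := by
  rcases hz with hz | hz
  · exact edist_origin_le_of_mem_gasketV hz
  · calc SG.edist origin z = SG.edist (reflectHom origin) (reflectHom (reflectHom z)) := by
          rw [reflectHom_origin, reflectHom_reflectHom]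
      _ ≤ SG.edist origin (reflectHom z) := reflectHom.edist_le _ _
      _ ≤ ((2 ^ n : ℕ) : ℕ∞) := edist_origin_le_of_mem_gasketV hz

lemma exists_mem_gasketV_union (z : Vtx) :
    ∃ n, z.1 ∈ gasketV n ∪ reflect ⁻¹' gasketV n := by
  rcases z.2 with hz | ⟨p, hp, hpz⟩
  · obtain ⟨n, hn⟩ := Set.mem_iUnion.1 hz
    exact ⟨n, Or.inl hn⟩
  · obtain ⟨n, hn⟩ := Set.mem_iUnion.1 hp
    refine ⟨n, Or.inr ?_⟩
    rwa [Set.mem_preimage, ← hpz, reflect_involutive p]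

lemma reachable_origin (z : Vtx) : SG.Reachable origin z := by
  obtain ⟨n, hn⟩ := exists_mem_gasketV_union z
  exact SG.reachable_of_edist_ne_top
    (ne_top_of_le_ne_top (ENat.natCast_ne_top _) (edist_origin_le hn))

def level (p : ℝ × ℝ) : ℝ := |p.1| + p.2 / Real.sqrt 3

lemma level_reflect (p : ℝ × ℝ) : level (reflect p) = level p := by simp [level, reflect]

lemma level_eq_of_mem_gasketV {n : ℕ} {p : ℝ × ℝ} (hp : p ∈ gasketV n) :
    level p = coordA p + coordB p := by
  rw [level, abs_of_nonneg (fst_nonneg_of_mem_simplex (gasketV_subset_simplex n hp))]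
  simp only [coordA, coordB]; ring

lemma coord_sub_mem_Icc_of_mem_gasketE {n : ℕ} {p q : ℝ × ℝ} (h : (p, q) ∈ gasketE n) :
    coordA q + coordB q - (coordA p + coordB p) ∈ Set.Icc 0 1 := by
  induction n generalizing p q with
  | zero =>
    simp only [gasketE_zero, Set.mem_insert_iff, Set.mem_singleton_iff, Prod.mk.injEq] at h
    rcases h with ⟨rfl, rfl⟩ | ⟨rfl, rfl⟩ | ⟨rfl, rfl⟩ <;> norm_num
  | succ n ih =>
    obtain ⟨t, -, ⟨p', q'⟩, he, heq⟩ := mem_gasketE_succ.1 h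
    obtain ⟨rfl, rfl⟩ := Prod.mk.inj heq
    convert ih he using 1
    simp only [coordA_add, coordB_add]; ring

lemma abs_level_sub_le_one {p q : ℝ × ℝ} (h : (p, q) ∈ SGplusE) :
    |level q - level p| ≤ 1 := by
  obtain ⟨n, hn⟩ := Set.mem_iUnion.1 h
  obtain ⟨h0, h1⟩ := coord_sub_mem_Icc_of_mem_gasketE hn
  rw [level_eq_of_mem_gasketV (gasketE_endpoints hn).1,
    level_eq_of_mem_gasketV (gasketE_endpoints hn).2, abs_le]
  constructor <;> linarith

lemma level_le_level_add_one {x y : Vtx} (h : SG.Adj x y) : level y.1 ≤ level x.1 + 1 := by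
  have key : |level y.1 - level x.1| ≤ 1 := by
    rcases h.2 with h | h | h | h
    · exact abs_level_sub_le_one h
    · rw [abs_sub_comm]; exact abs_level_sub_le_one h
    · simpa only [level_reflect] using abs_level_sub_le_one h
    · rw [abs_sub_comm]; simpa only [level_reflect] using abs_level_sub_le_one h
  linarith [le_abs_self (level y.1 - level x.1)]

lemma level_le_dist (z : Vtx) : level z.1 ≤ SG.dist origin z := by
  obtain ⟨w, hw⟩ := (reachable_origin z).exists_walk_length_eq_dist
  have h0 : level origin.1 = 0 := by simp [level, origin]
  have := w.apply_le_apply_add_length (f := fun x : Vtx => level x.1)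
    fun _ _ => level_le_level_add_one
  simp only [h0, zero_add, hw] at this
  exact this

lemma mem_ball_origin_pow_two_iff {k : ℕ} {z : Vtx} :
    z ∈ ball origin ((2 ^ k : ℕ) : ℝ) ↔ z.1 ∈ gasketV k ∪ reflect ⁻¹' gasketV k := by
  refine ⟨fun hz => ?_, fun hz => ?_⟩
  · have hlev : level z.1 ≤ 2 ^ k := by exact_mod_cast (level_le_dist z).trans hz
    obtain ⟨n, hn | hn⟩ := exists_mem_gasketV_union z
    · exact Or.inl (mem_gasketV_of_coord_le hn (by rwa [← level_eq_of_mem_gasketV hn]))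
    · refine Or.inr (mem_gasketV_of_coord_le hn ?_)
      rwa [← level_eq_of_mem_gasketV hn, level_reflect]
  · show (SG.dist origin z : ℝ) ≤ ((2 ^ k : ℕ) : ℝ)
    exact_mod_cast ENat.toNat_le_of_le_natCast (edist_origin_le hz)

lemma gasketV_inter_reflect (k : ℕ) : gasketV k ∩ reflect ⁻¹' gasketV k = {0} := by
  apply Set.Subset.antisymm
  · rintro p ⟨hp, hp'⟩
    have hs := gasketV_subset_simplex k hp
    have h1 : p.1 ≤ 0 := by
      simpa [reflect] using fst_nonneg_of_mem_simplex (gasketV_subset_simplex k hp')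
    rw [fst_eq_coord] at h1
    exact eq_zero_of_mem_simplex hs (by linarith [hs.1, hs.2.1])
  · rintro _ rfl
    have h0 : (0 : ℝ × ℝ) ∈ gasketV k := corners_subset_gasketV k (by simp [corners])
    exact ⟨h0, by rwa [Set.mem_preimage, reflect_zero]⟩

lemma ncard_gasketV_union_reflect (k : ℕ) :
    (gasketV k ∪ reflect ⁻¹' gasketV k).ncard = 3 ^ (k+1) + 2 := by
  have hfin := gasketV_finite k
  have hrefl : (reflect ⁻¹' gasketV k).ncard = (gasketV k).ncard :=
    Set.ncard_preimage_of_injective_subset_range reflect_involutive.injective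
      (by simp [reflect_involutive.surjective.range_eq])
  have h := Set.ncard_union_add_ncard_inter _ _ hfin
    (hfin.preimage reflect_involutive.injective.injOn)
  rw [gasketV_inter_reflect, Set.ncard_singleton, hrefl] at h
  have := two_mul_ncard_gasketV k
  omega

/-- `|B_∘(2^k)| = 3^{k+1} + 2`. -/
theorem ball_card_pow_two (k : ℕ) : bvol (2 ^ k) = 3 ^ (k + 1) + 2 := by
  have hball : ball origin ((2 ^ k : ℕ) : ℝ) =
      Subtype.val ⁻¹' (gasketV k ∪ reflect ⁻¹' gasketV k) :=
    Set.ext fun _ => mem_ball_origin_pow_two_iff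
  have hrange :
      gasketV k ∪ reflect ⁻¹' gasketV k ⊆ Set.range (Subtype.val : Vtx → ℝ × ℝ) := by
    rw [Subtype.range_val]
    rintro p (hp | hp)
    · exact gasketV_subset_SGV k hp
    · simpa [reflect_involutive p] using reflect_mem_SGV (gasketV_subset_SGV k hp)
  rw [bvol, hball, Set.ncard_preimage_of_injective_subset_range Subtype.val_injective hrange,
    ncard_gasketV_union_reflect]

end SGidla
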